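/- arXiv:1201.5221 — 6 statements merged into one kernel-verified Lean document; each statement's English description precedes it below -/
import Mathlib

section
/- Let G be a perfect group and G̃ the central extension of G by an abelian group A defined by a 2-cocycle h : G × G → A. If h is strongly non-split, i.e. for every proper subgroup A' < A the induced 2-cocycle G × G → A/A' is non-split, then G̃ is perfect. -/
/-!
The image of `⁅G̃, G̃⁆` in `G` is `⁅G, G⁆ = G`, so `⁅G̃, G̃⁆` contains a lift `(s g, g)` of every
`g`. These lifts split `h` modulo `A' = {a | (a, 1) ∈ ⁅G̃, G̃⁆}`, so strong non-splitting forces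
`A' = A`. Thus `⁅G̃, G̃⁆` contains the kernel `A` of `G̃ → G` as well as lifts of all of `G`.
-/

/-- The central extension of `G` by `A` defined by a 2-cocycle `h` (trivial action):
the group structure on `A × G` with multiplication
`(a₁,g₁)*(a₂,g₂) = (a₁+a₂+h g₁ g₂, g₁g₂)`. -/
def centExtGroup {G A : Type*} [Group G] [AddCommGroup A] (h : G → G → A)
    (hcoc : ∀ g₁ g₂ g₃ : G, h g₁ g₂ + h (g₁ * g₂) g₃ = h g₁ (g₂ * g₃) + h g₂ g₃)
    (hl : ∀ g : G, h 1 g = 0) (hr : ∀ g : G, h g 1 = 0) : Group (A × G) :=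
  letI : Mul (A × G) := ⟨fun p q => (p.1 + q.1 + h p.2 q.2, p.2 * q.2)⟩
  letI : One (A × G) := ⟨((0 : A), (1 : G))⟩
  letI : Inv (A × G) := ⟨fun p => (-p.1 - h p.2⁻¹ p.2, p.2⁻¹)⟩
  Group.ofLeftAxioms
    (fun p q r => by
      refine Prod.ext ?_ (mul_assoc p.2 q.2 r.2)
      show p.1 + q.1 + h p.2 q.2 + r.1 + h (p.2 * q.2) r.2
          = p.1 + (q.1 + r.1 + h q.2 r.2) + h p.2 (q.2 * r.2)
      have key := hcoc p.2 q.2 r.2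
      calc p.1 + q.1 + h p.2 q.2 + r.1 + h (p.2 * q.2) r.2
          = p.1 + q.1 + r.1 + (h p.2 q.2 + h (p.2 * q.2) r.2) := by abel
        _ = p.1 + q.1 + r.1 + (h p.2 (q.2 * r.2) + h q.2 r.2) := by rw [key]
        _ = p.1 + (q.1 + r.1 + h q.2 r.2) + h p.2 (q.2 * r.2) := by abel)
    (fun p => by
      refine Prod.ext ?_ (one_mul p.2)
      show 0 + p.1 + h 1 p.2 = p.1
      rw [hl]; abel)
    (fun p => by
      refine Prod.ext ?_ (inv_mul_cancel p.2)
      show -p.1 - h p.2⁻¹ p.2 + p.1 + h p.2⁻¹ p.2 = 0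
      abel)

/-- The carrier of `centExtGroup h hcoc hl hr`, so that its group structure is an instance. -/
def CentExt {G A : Type*} [Group G] [AddCommGroup A] (h : G → G → A)
    (_hcoc : ∀ g₁ g₂ g₃ : G, h g₁ g₂ + h (g₁ * g₂) g₃ = h g₁ (g₂ * g₃) + h g₂ g₃)
    (_hl : ∀ g : G, h 1 g = 0) (_hr : ∀ g : G, h g 1 = 0) : Type _ :=
  A × G

namespace CentExt

variable {G A : Type*} [Group G] [AddCommGroup A] {h : G → G → A}
  {hcoc : ∀ g₁ g₂ g₃ : G, h g₁ g₂ + h (g₁ * g₂) g₃ = h g₁ (g₂ * g₃) + h g₂ g₃}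
  {hl : ∀ g : G, h 1 g = 0} {hr : ∀ g : G, h g 1 = 0}

instance : Group (CentExt h hcoc hl hr) := centExtGroup h hcoc hl hr

def mk (a : A) (g : G) : CentExt h hcoc hl hr := (a, g)

theorem mk_one_mul_mk (a b : A) (g : G) :
    mk a 1 * mk b g = (mk (a + b) g : CentExt h hcoc hl hr) :=
  Prod.ext (by change a + b + h 1 g = a + b; rw [hl, add_zero]) (one_mul g)

def proj : CentExt h hcoc hl hr →* G where
  toFun := Prod.snd
  map_one' := rfl
  map_mul' _ _ := rfl

theorem proj_surjective : Function.Surjective (proj : CentExt h hcoc hl hr →* G) :=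
  fun g => ⟨mk 0 g, rfl⟩

def centralPart (H : Subgroup (CentExt h hcoc hl hr)) : AddSubgroup A where
  carrier := {a | mk a 1 ∈ H}
  zero_mem' := H.one_mem
  add_mem' {a b} ha hb := by
    simpa only [Set.mem_ofPred_eq, mk_one_mul_mk] using H.mul_mem ha hb
  neg_mem' {a} ha := by
    have hinv : (mk a 1 : CentExt h hcoc hl hr)⁻¹ = mk (-a) 1 :=
      inv_eq_of_mul_eq_one_left (by rw [mk_one_mul_mk, neg_add_cancel]; rfl)
    simpa only [Set.mem_ofPred_eq, hinv] using H.inv_mem ha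

theorem mem_centralPart {H : Subgroup (CentExt h hcoc hl hr)} {a : A} :
    a ∈ centralPart H ↔ mk a 1 ∈ H :=
  Iff.rfl

/-- Pick `s g` with `(s g, g) ∈ H`. Then `(s x, x) (s y, y) = (c, 1) (s (xy), xy)` with
`c = s x + s y + h x y - s (xy)`, so `c ∈ centralPart H`: the map `-s` splits `h` modulo
`centralPart H`. -/
theorem exists_split_mod_centralPart (H : Subgroup (CentExt h hcoc hl hr)) (hH : H.map proj = ⊤) :
    ∃ f : G → A ⧸ centralPart H, f 1 = 0 ∧
      ∀ x y : G, (QuotientAddGroup.mk (h x y) : A ⧸ centralPart H) = f x + f y - f (x * y) := by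
  have hsec : ∀ g : G, ∃ a : A, mk a g ∈ H := by
    intro g
    obtain ⟨x, hx, rfl⟩ := (Subgroup.mem_map (f := proj)).mp (hH ▸ Subgroup.mem_top g)
    exact ⟨x.1, hx⟩
  choose s hs using hsec
  refine ⟨fun g => -(s g : A ⧸ centralPart H), ?_, fun x y => ?_⟩
  · rw [neg_eq_zero, QuotientAddGroup.eq_zero_iff]
    exact hs 1
  · set c := s x + s y + h x y - s (x * y)
    have hprod : mk (s x) x * mk (s y) y =
        (mk c 1 * mk (s (x * y)) (x * y) : CentExt h hcoc hl hr) := by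
      rw [mk_one_mul_mk]
      exact Prod.ext (sub_add_cancel _ _).symm rfl
    have hc : c ∈ centralPart H :=
      (H.mul_mem_cancel_right (hs (x * y))).mp (hprod ▸ H.mul_mem (hs x) (hs y))
    rw [← QuotientAddGroup.eq_zero_iff] at hc
    simp only [c, QuotientAddGroup.mk_sub, QuotientAddGroup.mk_add] at hc
    beta_reduce
    rw [← sub_eq_zero, ← hc]
    abel

end CentExt

theorem map_commutator_eq_top_of_surjective {E G : Type*} [Group E] [Group G]
    {π : E →* G} (hπ : Function.Surjective π) (hG : commutator G = ⊤) :
    (commutator E).map π = ⊤ := by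
  rw [commutator_def, Subgroup.map_commutator, Subgroup.map_top_of_surjective π hπ,
    ← commutator_def, hG]

/-- If `G` is perfect and the 2-cocycle `h : G × G → A` is strongly
non-split (for every proper subgroup `A' < A` the induced 2-cocycle with values in
`A/A'` is non-split), then the central extension `G̃` is perfect. -/
theorem statement7 {G A : Type*} [Group G] [AddCommGroup A]
    (hG : commutator G = ⊤)
    (h : G → G → A)
    (hcoc : ∀ g₁ g₂ g₃ : G, h g₁ g₂ + h (g₁ * g₂) g₃ = h g₁ (g₂ * g₃) + h g₂ g₃)
    (hl : ∀ g : G, h 1 g = 0) (hr : ∀ g : G, h g 1 = 0)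
    (hsns : ∀ A' : AddSubgroup A, A' ≠ ⊤ →
      ¬ ∃ f : G → A ⧸ A', f 1 = 0 ∧
        ∀ x y : G, (QuotientAddGroup.mk (h x y) : A ⧸ A') = f x + f y - f (x * y)) :
    letI : Group (A × G) := centExtGroup h hcoc hl hr
    commutator (A × G) = ⊤ := by
  show commutator (CentExt h hcoc hl hr) = ⊤
  have hmap : (commutator (CentExt h hcoc hl hr)).map CentExt.proj = ⊤ :=
    map_commutator_eq_top_of_surjective CentExt.proj_surjective hG
  have hA : CentExt.centralPart (commutator (CentExt h hcoc hl hr)) = ⊤ :=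
    not_not.mp fun hne => hsns _ hne (CentExt.exists_split_mod_centralPart _ hmap)
  have hker : CentExt.proj.ker ≤ commutator (CentExt h hcoc hl hr) := by
    rintro ⟨a, g⟩ (rfl : g = 1)
    exact CentExt.mem_centralPart.mp (hA ▸ AddSubgroup.mem_top a)
  rw [← Subgroup.comap_map_eq_self hker, hmap, Subgroup.comap_top]
end

section
/- Let G be a perfect group acting trivially on an abelian group C, and let A ≤ C be a subgroup. A 2-cocycle h : G × G → A is non-split via functions with values in A if and only if h, regarded as a 2-cocycle with values in C, is non-split via functions with values in C. -/
/-!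
If `h = δf` with `f : G → C` and `h` takes values in `A`, then `f` composed with `C → C ⧸ A`
is a homomorphism from `G` to an abelian group. A perfect group has no nontrivial such
homomorphism, so `f` already takes values in `A`.
-/

theorem MonoidHom.eq_one_of_commutator_eq_top {G H : Type*} [Group G] [CommGroup H]
    (hG : commutator G = ⊤) (φ : G →* H) : φ = 1 := by
  ext x
  have hker : (⊤ : Subgroup G) ≤ φ.ker := hG ▸ Abelianization.commutator_subset_ker φ
  exact hker (Subgroup.mem_top x)

theorem AddSubgroup.mem_of_commutator_eq_top_of_coboundary_mem {G C : Type*} [Group G]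
    [AddCommGroup C] (hG : commutator G = ⊤) {A : AddSubgroup C} {f : G → C}
    (hf : ∀ x y : G, f x + f y - f (x * y) ∈ A) (x : G) : f x ∈ A := by
  let φ : G →* Multiplicative (C ⧸ A) :=
    MonoidHom.mk' (fun x => Multiplicative.ofAdd (f x : C ⧸ A)) fun x y => by
      have hxy : ((f (x * y) : C) : C ⧸ A) = (f x + f y : C) :=
        (QuotientAddGroup.eq_iff_sub_mem.mpr (hf x y)).symm
      simp only [hxy, QuotientAddGroup.mk_add, ofAdd_add]
  have hφx : φ x = 1 := DFunLike.congr_fun (φ.eq_one_of_commutator_eq_top hG) x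
  exact (QuotientAddGroup.eq_zero_iff _).mp (congrArg Multiplicative.toAdd hφx)

theorem statement8_general {G C : Type*} [Group G] [AddCommGroup C]
    (hG : commutator G = ⊤)
    (A : AddSubgroup C)
    (h : G → G → C) (hmem : ∀ x y : G, h x y ∈ A) :
    (¬ ∃ f : G → C, (∀ x : G, f x ∈ A) ∧ f 1 = 0 ∧
        ∀ x y : G, h x y = f x + f y - f (x * y)) ↔
    (¬ ∃ f : G → C, f 1 = 0 ∧ ∀ x y : G, h x y = f x + f y - f (x * y)) := by
  refine not_congr ⟨fun ⟨f, _, hf1, hsplit⟩ => ⟨f, hf1, hsplit⟩, fun ⟨f, hf1, hsplit⟩ => ?_⟩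
  have hcobdry : ∀ x y : G, f x + f y - f (x * y) ∈ A := fun x y => hsplit x y ▸ hmem x y
  exact ⟨f, A.mem_of_commutator_eq_top_of_coboundary_mem hG hcobdry, hf1, hsplit⟩

/-- Let `G` be perfect acting trivially on an abelian group `C` with a
subgroup `A ≤ C`, and let `h` be a 2-cocycle with values in `A`. Then `h` is non-split
via `A`-valued functions iff it is non-split via `C`-valued functions. -/
theorem statement8 {G C : Type*} [Group G] [AddCommGroup C]
    (hG : commutator G = ⊤)
    (A : AddSubgroup C)
    (h : G → G → C) (hmem : ∀ x y : G, h x y ∈ A)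
    (hcoc : ∀ x y z : G, h x y + h (x * y) z = h x (y * z) + h y z)
    (hl : ∀ g : G, h 1 g = 0) (hr : ∀ g : G, h g 1 = 0) :
    (¬ ∃ f : G → C, (∀ x : G, f x ∈ A) ∧ f 1 = 0 ∧
        ∀ x y : G, h x y = f x + f y - f (x * y)) ↔
    (¬ ∃ f : G → C, f 1 = 0 ∧ ∀ x y : G, h x y = f x + f y - f (x * y)) :=
  statement8_general hG A h hmem
end

section
/- Let f : H → G be a surjective group homomorphism, let G act on an abelian group A, and let h : G × G → A be a 2-cocycle. If the only homomorphism from ker(f) to A is trivial and the pulled-back 2-cocycle h' = h∘(f,f) : H × H → A is split, then h is split. -/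
/-!
A splitting `F` of the pulled-back cocycle `h ∘ (f × f)` is additive on `ker f`, because `h`
vanishes as soon as one argument is `1`; so by hypothesis `F` vanishes on `ker f`. Then
`F (x * k) = F x` for `k ∈ ker f`, i.e. `F` is constant on the fibres of `f` and descends along
the surjection `f` to a splitting of `h`.
-/

section PullbackSplitting

variable {G H A : Type*} [Group G] [Group H] [AddCommGroup A] [DistribMulAction G A]
  {f : H →* G} {h : G → G → A} {F : H → A}

theorem map_mul_of_mem_ker_left (hl : ∀ g : G, h 1 g = 0)
    (hF : ∀ x y : H, h (f x) (f y) = F x + f x • F y - F (x * y))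
    {k : H} (hk : k ∈ f.ker) (y : H) : F (k * y) = F k + F y := by
  have := hF k y
  rw [MonoidHom.mem_ker.mp hk, hl, one_smul] at this
  exact (sub_eq_zero.mp this.symm).symm

theorem map_mul_of_mem_ker_right (hr : ∀ g : G, h g 1 = 0)
    (hF : ∀ x y : H, h (f x) (f y) = F x + f x • F y - F (x * y))
    (x : H) {k : H} (hk : k ∈ f.ker) : F (x * k) = F x + f x • F k := by
  have := hF x k
  rw [MonoidHom.mem_ker.mp hk, hr] at this
  exact (sub_eq_zero.mp this.symm).symm

theorem eq_of_map_eq_of_eq_zero_on_ker (hr : ∀ g : G, h g 1 = 0)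
    (hF : ∀ x y : H, h (f x) (f y) = F x + f x • F y - F (x * y))
    (hker : ∀ k ∈ f.ker, F k = 0) {x y : H} (hxy : f x = f y) : F x = F y := by
  have hmem : y⁻¹ * x ∈ f.ker := by simp [MonoidHom.mem_ker, hxy]
  calc F x = F (y * (y⁻¹ * x)) := by rw [mul_inv_cancel_left]
    _ = F y := by rw [map_mul_of_mem_ker_right hr hF y hmem, hker _ hmem, smul_zero, add_zero]

end PullbackSplitting

theorem statement9_general {G H A : Type*} [Group G] [Group H] [AddCommGroup A]
    [DistribMulAction G A]
    (f : H →* G) (hf : Function.Surjective f)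
    (h : G → G → A)
    (hl : ∀ g : G, h 1 g = 0) (hr : ∀ g : G, h g 1 = 0)
    (htriv : ∀ φ : H → A,
      (∀ x ∈ f.ker, ∀ y ∈ f.ker, φ (x * y) = φ x + φ y) → ∀ x ∈ f.ker, φ x = 0)
    (hsplit : ∃ F : H → A, F 1 = 0 ∧
      ∀ x y : H, h (f x) (f y) = F x + f x • F y - F (x * y)) :
    ∃ g : G → A, g 1 = 0 ∧ ∀ x y : G, h x y = g x + x • g y - g (x * y) := by
  obtain ⟨F, -, hF⟩ := hsplit
  have hker : ∀ k ∈ f.ker, F k = 0 :=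
    htriv F fun x hx y _ => map_mul_of_mem_ker_left hl hF hx y
  have hdescend : ∀ {x y : H}, f x = f y → F x = F y :=
    eq_of_map_eq_of_eq_zero_on_ker hr hF hker
  set s := Function.surjInv hf
  have hfs : ∀ x, f (s x) = x := Function.surjInv_eq hf
  refine ⟨fun x => F (s x), hker _ (MonoidHom.mem_ker.mpr (hfs 1)), fun x y => ?_⟩
  have := hF (s x) (s y)
  rwa [hfs, hfs, hdescend (show f (s x * s y) = f (s (x * y)) by simp [hfs])] at this

/-- Let `f : H → G` be a surjective homomorphism, `G` acting on `A`, and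
`h : G × G → A` a 2-cocycle. If the only homomorphism from `ker f` to `A` is trivial
and the pulled-back 2-cocycle `h∘(f,f)` on `H` is split, then `h` is split. -/
theorem statement9 {G H A : Type*} [Group G] [Group H] [AddCommGroup A]
    [DistribMulAction G A]
    (f : H →* G) (hf : Function.Surjective f)
    (h : G → G → A)
    (hcoc : ∀ g₁ g₂ g₃ : G, h g₁ g₂ + h (g₁ * g₂) g₃ = h g₁ (g₂ * g₃) + g₁ • h g₂ g₃)
    (hl : ∀ g : G, h 1 g = 0) (hr : ∀ g : G, h g 1 = 0)
    (htriv : ∀ φ : H → A,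
      (∀ x ∈ f.ker, ∀ y ∈ f.ker, φ (x * y) = φ x + φ y) → ∀ x ∈ f.ker, φ x = 0)
    (hsplit : ∃ F : H → A, F 1 = 0 ∧
      ∀ x y : H, h (f x) (f y) = F x + f x • F y - F (x * y)) :
    ∃ g : G → A, g 1 = 0 ∧ ∀ x y : G, h x y = g x + x • g y - g (x * y) :=
  statement9_general f hf h hl hr htriv hsplit
end

section
/- Let k be a field of characteristic ≠ 2 and A a torsion-free abelian group. Suppose c : k× × k× → A is a symplectic Steinberg symbol with finite image that additionally satisfies c(x,y) = c(y⁻¹,x), c(x,y) = c(x,−xy), and the property that for each fixed x the map t ↦ c(x,t²) is a group homomorphism k× → A. Then c(s,t) = c(t,s) = 0 for every nonzero s ∈ k that is a sum of squares of elements of k× and every t ∈ k×. -/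
/-!
Since `t ↦ c(x, t²)` is a homomorphism with finite image in a torsion-free group, it vanishes,
so `c` only depends on square classes. It is then symmetric, and `q(x) = c(x, x)` satisfies
`2 c(x, y) = q(x) + q(y) - q(xy)`. The left radical `{a | c(a, ·) = 0}` contains all squares and
is closed under nonzero sums: for `a, b` in it and `s = a + b ≠ 0`, the relation
`c(a/s, b/s) = 0` gives `2 q(s) = 0`, and `c(x, y) = c(x, (1 - x) y)` for `x = b/s` gives
`c(s, t) = c(s, -at)`. Polarizing both sides yields `2 c(s, t) = ± (q(st) - q(t))`, hence
`4 c(s, t) = 0`.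
-/

theorem eq_zero_of_forall_nsmul_mem {A : Type*} [AddCommGroup A] [IsAddTorsionFree A]
    {a : A} {S : Set A} (hS : S.Finite) (h : ∀ n : ℕ, n • a ∈ S) : a = 0 :=
  (finite_multiples.1 (hS.subset (by rintro _ ⟨n, rfl⟩; exact h n))).eq_zero'

section

variable {k A : Type*} [Field k] [AddCommGroup A]

theorem nsmul_eq_of_sq_hom {c : k → k → A}
    (hom : ∀ x s t : k, x ≠ 0 → s ≠ 0 → t ≠ 0 →
      c x ((s * t) ^ 2) = c x (s ^ 2) + c x (t ^ 2))
    {x u : k} (hx : x ≠ 0) (hu : u ≠ 0) (n : ℕ) : c x ((u ^ n) ^ 2) = n • c x (u ^ 2) := by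
  induction n with
  | zero => simpa using hom x 1 1 hx one_ne_zero one_ne_zero
  | succ n ih => rw [pow_succ u n, hom x _ u hx (pow_ne_zero n hu) hu, ih, succ_nsmul]

theorem sq_eq_zero_of_sq_hom [IsAddTorsionFree A] {c : k → k → A}
    (hfin : {a : A | ∃ x y : k, x ≠ 0 ∧ y ≠ 0 ∧ c x y = a}.Finite)
    (hom : ∀ x s t : k, x ≠ 0 → s ≠ 0 → t ≠ 0 →
      c x ((s * t) ^ 2) = c x (s ^ 2) + c x (t ^ 2))
    {x u : k} (hx : x ≠ 0) (hu : u ≠ 0) : c x (u ^ 2) = 0 :=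
  eq_zero_of_forall_nsmul_mem hfin fun n =>
    ⟨x, (u ^ n) ^ 2, hx, by positivity, nsmul_eq_of_sq_hom hom hx hu n⟩

structure IsSquareClassSymbol (c : k → k → A) : Prop where
  cocycle : ∀ x y z : k, x ≠ 0 → y ≠ 0 → z ≠ 0 →
    c x y + c (x * y) z = c x (y * z) + c y z
  right_mul_one_sub : ∀ x y : k, x ≠ 0 → y ≠ 0 → x ≠ 1 → c x y = c x ((1 - x) * y)
  inv_swap : ∀ x y : k, x ≠ 0 → y ≠ 0 → c x y = c y⁻¹ x
  right_neg_mul : ∀ x y : k, x ≠ 0 → y ≠ 0 → c x y = c x (-(x * y))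
  right_sq : ∀ x u : k, x ≠ 0 → u ≠ 0 → c x (u ^ 2) = 0

def leftRadical (c : k → k → A) : Set k := {a | ∀ t, t ≠ 0 → c a t = 0}

namespace IsSquareClassSymbol

variable {c : k → k → A}

theorem right_one (hc : IsSquareClassSymbol c) {x : k} (hx : x ≠ 0) : c x 1 = 0 := by
  simpa using hc.right_sq x 1 hx one_ne_zero

theorem left_sq (hc : IsSquareClassSymbol c) {x u : k} (hx : x ≠ 0) (hu : u ≠ 0) :
    c (u ^ 2) x = 0 := by
  rw [hc.inv_swap _ _ (pow_ne_zero 2 hu) hx, hc.right_sq _ _ (inv_ne_zero hx) hu]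

theorem sq_mem_leftRadical (hc : IsSquareClassSymbol c) {u : k} (hu : u ≠ 0) :
    u ^ 2 ∈ leftRadical c :=
  fun _ ht => hc.left_sq ht hu

theorem right_sq_mul (hc : IsSquareClassSymbol c) {x y u : k} (hx : x ≠ 0) (hy : y ≠ 0)
    (hu : u ≠ 0) : c x (u ^ 2 * y) = c x y := by
  have h := hc.cocycle x y (u ^ 2) hx hy (pow_ne_zero 2 hu)
  rwa [hc.right_sq _ _ (mul_ne_zero hx hy) hu, hc.right_sq _ _ hy hu, add_zero, add_zero,
    mul_comm, eq_comm] at h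

theorem left_sq_mul (hc : IsSquareClassSymbol c) {x y u : k} (hx : x ≠ 0) (hy : y ≠ 0)
    (hu : u ≠ 0) : c (u ^ 2 * x) y = c x y := by
  have h := hc.cocycle x (u ^ 2) y hx (pow_ne_zero 2 hu) hy
  rwa [hc.right_sq _ _ hx hu, hc.left_sq hy hu, zero_add, add_zero, hc.right_sq_mul hx hy hu,
    mul_comm] at h

theorem diag_sq_mul (hc : IsSquareClassSymbol c) {x u : k} (hx : x ≠ 0) (hu : u ≠ 0) :
    c (u ^ 2 * x) (u ^ 2 * x) = c x x := by
  rw [hc.left_sq_mul hx (by positivity) hu, hc.right_sq_mul hx hx hu]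

theorem left_inv (hc : IsSquareClassSymbol c) {x y : k} (hx : x ≠ 0) (hy : y ≠ 0) :
    c x⁻¹ y = c x y := by
  rw [show x⁻¹ = x⁻¹ ^ 2 * x by field_simp, hc.left_sq_mul hx hy (inv_ne_zero hx)]

theorem comm (hc : IsSquareClassSymbol c) {x y : k} (hx : x ≠ 0) (hy : y ≠ 0) :
    c x y = c y x := by
  rw [hc.inv_swap x y hx hy, hc.left_inv hy hx]

theorem polarization (hc : IsSquareClassSymbol c) {x y : k} (hx : x ≠ 0) (hy : y ≠ 0) :
    c x y + c x y = c x x + c y y - c (x * y) (x * y) := by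
  have hxy := mul_ne_zero hx hy
  have h₁ := hc.cocycle x y (x * y) hx hy hxy
  have h₂ := hc.cocycle x y y hx hy hy
  rw [show y * (x * y) = y ^ 2 * x by ring, hc.right_sq_mul hx hx hy, hc.comm hy hxy] at h₁
  rw [← sq, hc.right_sq _ _ hx hy] at h₂
  rw [eq_sub_iff_add_eq]
  calc c x y + c x y + c (x * y) (x * y)
      = (c x y + c (x * y) y) + (c x y + c (x * y) (x * y)) - c (x * y) y := by abel
    _ = c x x + c y y := by rw [h₁, h₂]; abel

theorem diag_add_diag_neg (hc : IsSquareClassSymbol c) {x : k} (hx : x ≠ 0) :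
    c x x + c (-x) (-x) = c (-1) (-1) := by
  have h := hc.polarization hx (neg_ne_zero.2 hx)
  have hneg : c x (-x) = 0 := by
    simpa [hc.right_one hx] using (hc.right_neg_mul x 1 hx one_ne_zero).symm
  rwa [hneg, show x * -x = x ^ 2 * -1 by ring,
    hc.diag_sq_mul (neg_ne_zero.2 one_ne_zero) hx, add_zero, eq_comm, sub_eq_zero] at h

theorem right_one_sub_self (hc : IsSquareClassSymbol c) {x : k} (hx : x ≠ 0) (hx1 : x ≠ 1) :
    c x (1 - x) = 0 := by
  simpa [hc.right_one hx] using (hc.right_mul_one_sub x 1 hx one_ne_zero hx1).symm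

theorem diag_mul_of_mem_leftRadical (hc : IsSquareClassSymbol c) {a z : k}
    (ha : a ∈ leftRadical c) (ha0 : a ≠ 0) (hz : z ≠ 0) :
    c (a * z) (a * z) = c a a + c z z := by
  have h := hc.polarization ha0 hz
  rwa [ha z hz, add_zero, eq_comm, sub_eq_zero, eq_comm] at h

theorem left_mul_of_mem_leftRadical (hc : IsSquareClassSymbol c) {b y z : k}
    (hb : b ∈ leftRadical c) (hb0 : b ≠ 0) (hy : y ≠ 0) (hz : z ≠ 0) :
    c (b * y) z = c y z := by
  have h := hc.cocycle b y z hb0 hy hz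
  rwa [hb y hy, hb _ (mul_ne_zero hy hz), zero_add, zero_add] at h

theorem diag_add_eq_zero [IsAddTorsionFree A] (hc : IsSquareClassSymbol c) {a b : k}
    (ha : a ∈ leftRadical c) (hb : b ∈ leftRadical c) (ha0 : a ≠ 0) (hb0 : b ≠ 0)
    (hs : a + b ≠ 0) :
    c (a + b) (a + b) = 0 := by
  set s := a + b
  have hsi : s⁻¹ ≠ 0 := inv_ne_zero hs
  have hx1 : a * s⁻¹ ≠ 1 := by
    rw [Ne, mul_inv_eq_one₀ hs]
    exact fun h => hb0 (left_eq_add.mp h)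
  have hsteinberg := hc.right_one_sub_self (mul_ne_zero ha0 hsi) hx1
  have h := hc.polarization (mul_ne_zero ha0 hsi) (mul_ne_zero hb0 hsi)
  rw [show 1 - a * s⁻¹ = b * s⁻¹ by field_simp; ring] at hsteinberg
  rw [hsteinberg, show a * s⁻¹ = s⁻¹ ^ 2 * (a * s) by field_simp,
    show b * s⁻¹ = s⁻¹ ^ 2 * (b * s) by field_simp,
    show s⁻¹ ^ 2 * (a * s) * (s⁻¹ ^ 2 * (b * s)) = s⁻¹ ^ 2 * (a * b) by field_simp,
    hc.diag_sq_mul (mul_ne_zero ha0 hs) hsi, hc.diag_sq_mul (mul_ne_zero hb0 hs) hsi,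
    hc.diag_sq_mul (mul_ne_zero ha0 hb0) hsi, hc.diag_mul_of_mem_leftRadical ha ha0 hs,
    hc.diag_mul_of_mem_leftRadical hb hb0 hs, hc.diag_mul_of_mem_leftRadical ha ha0 hb0] at h
  refine (nsmul_eq_zero_iff_right two_ne_zero).1 ?_
  rw [two_nsmul]
  calc c s s + c s s = c a a + c s s + (c b b + c s s) - (c a a + c b b) := by abel
    _ = 0 := by rw [← h, add_zero]

theorem right_eq_neg_mul (hc : IsSquareClassSymbol c) {a b t : k} (hb : b ∈ leftRadical c)
    (ha0 : a ≠ 0) (hb0 : b ≠ 0) (hs : a + b ≠ 0) (ht : t ≠ 0) :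
    c (a + b) t = c (a + b) (-(a * t)) := by
  set s := a + b
  have hsi : s⁻¹ ≠ 0 := inv_ne_zero hs
  have hy1 : b * s⁻¹ ≠ 1 := by
    rw [Ne, mul_inv_eq_one₀ hs]
    exact fun h => ha0 (right_eq_add.mp h)
  have h := hc.right_mul_one_sub (b * s⁻¹) t (mul_ne_zero hb0 hsi) ht hy1
  have hat : a * s⁻¹ * t ≠ 0 := by positivity
  rw [show 1 - b * s⁻¹ = a * s⁻¹ by field_simp; ring,
    hc.left_mul_of_mem_leftRadical hb hb0 hsi ht,
    hc.left_mul_of_mem_leftRadical hb hb0 hsi hat, hc.left_inv hs ht, hc.left_inv hs hat,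
    hc.right_neg_mul s _ hs hat, show -(s * (a * s⁻¹ * t)) = -(a * t) by field_simp] at h
  exact h

theorem add_mem_leftRadical [IsAddTorsionFree A] (hc : IsSquareClassSymbol c) {a b : k}
    (ha : a ∈ leftRadical c) (hb : b ∈ leftRadical c) (ha0 : a ≠ 0) (hb0 : b ≠ 0)
    (hs : a + b ≠ 0) :
    a + b ∈ leftRadical c := by
  intro t ht
  set s := a + b
  have hq := hc.diag_add_eq_zero ha hb ha0 hb0 hs
  have hat : a * t ≠ 0 := mul_ne_zero ha0 ht
  have hst : s * t ≠ 0 := mul_ne_zero hs ht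
  have h₁ : c s t + c s t = c t t - c (s * t) (s * t) := by
    rw [hc.polarization hs ht, hq, zero_add]
  -- polarize `c(s, t) = c(s, -at)`, using `q(-x) = q(-1) - q(x)` twice
  have h₂ : c s t + c s t = c (s * t) (s * t) - c t t := by
    rw [hc.right_eq_neg_mul hb ha0 hb0 hs ht, hc.polarization hs (neg_ne_zero.2 hat), hq,
      show s * -(a * t) = -(a * (s * t)) by ring,
      eq_sub_of_add_eq' (hc.diag_add_diag_neg hat),
      eq_sub_of_add_eq' (hc.diag_add_diag_neg (mul_ne_zero ha0 hst)),
      hc.diag_mul_of_mem_leftRadical ha ha0 ht, hc.diag_mul_of_mem_leftRadical ha ha0 hst]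
    abel
  refine (nsmul_eq_zero_iff_right four_ne_zero).1 ?_
  calc (4 : ℕ) • c s t = (c s t + c s t) + (c s t + c s t) := by abel
    _ = 0 := by nth_rw 1 [h₁]; rw [h₂]; abel

theorem sum_sq_mem_leftRadical [IsAddTorsionFree A] (hc : IsSquareClassSymbol c) {ι : Type*}
    (s : Finset ι) (f : ι → k) (hs : ∑ i ∈ s, f i ^ 2 ≠ 0) :
    ∑ i ∈ s, f i ^ 2 ∈ leftRadical c := by
  refine (Finset.sum_induction _ (fun x => x = 0 ∨ x ∈ leftRadical c) ?_ (Or.inl rfl) ?_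
    ).resolve_left hs
  · rintro a b (rfl | ha) (rfl | hb)
    · simp
    · simp [hb]
    · simp [ha]
    · by_cases ha0 : a = 0
      · simp [ha0, hb]
      by_cases hb0 : b = 0
      · simp [hb0, ha]
      by_cases hab : a + b = 0
      · exact Or.inl hab
      exact Or.inr (hc.add_mem_leftRadical ha hb ha0 hb0 hab)
  · intro i _
    by_cases hi : f i = 0
    · simp [hi]
    · exact Or.inr (hc.sq_mem_leftRadical hi)

end IsSquareClassSymbol

end

theorem statement14_general {k A : Type*} [Field k] [AddCommGroup A]
    (htf : ∀ n : ℕ, 0 < n → ∀ a : A, n • a = 0 → a = 0)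
    (c : k → k → A)
    (hfin : {a : A | ∃ x y : k, x ≠ 0 ∧ y ≠ 0 ∧ c x y = a}.Finite)
    (S1 : ∀ x y z : k, x ≠ 0 → y ≠ 0 → z ≠ 0 →
      c x y + c (x * y) z = c x (y * z) + c y z)
    (S3 : ∀ x y : k, x ≠ 0 → y ≠ 0 → x ≠ 1 → c x y = c x ((1 - x) * y))
    (R1 : ∀ x y : k, x ≠ 0 → y ≠ 0 → c x y = c y⁻¹ x)
    (R2 : ∀ x y : k, x ≠ 0 → y ≠ 0 → c x y = c x (-(x * y)))
    (R3hom : ∀ x s t : k, x ≠ 0 → s ≠ 0 → t ≠ 0 →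
      c x ((s * t) ^ 2) = c x (s ^ 2) + c x (t ^ 2)) :
    ∀ s t : k, t ≠ 0 → s ≠ 0 →
      (∃ (n : ℕ) (a : Fin (n + 1) → k), (∀ i, a i ≠ 0) ∧ s = ∑ i, (a i) ^ 2) →
      c s t = 0 ∧ c t s = 0 := by
  rintro s t ht hs ⟨n, a, -, rfl⟩
  have : IsAddTorsionFree A := ⟨fun m hm x y hxy =>
    sub_eq_zero.1 (htf m (Nat.pos_of_ne_zero hm) _ (by rw [nsmul_sub, sub_eq_zero]; exact hxy))⟩
  have hc : IsSquareClassSymbol c :=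
    ⟨S1, S3, R1, R2, fun x u hx hu => sq_eq_zero_of_sq_hom hfin R3hom hx hu⟩
  have hrad := hc.sum_sq_mem_leftRadical Finset.univ a hs
  exact ⟨hrad t ht, (hc.comm ht hs).trans (hrad t ht)⟩

/-- Let `k` be a field of characteristic ≠ 2 and `A` a torsion-free abelian
group. If `c : k× × k× → A` is a symplectic Steinberg symbol with finite image which
moreover satisfies `c(x,y) = c(y⁻¹,x)`, `c(x,y) = c(x,−xy)`, and for each fixed `x` the
map `t ↦ c(x,t²)` is a homomorphism, then `c(s,t) = c(t,s) = 0` for every nonzero sum of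
squares `s` and every `t ∈ k×`. -/
theorem statement14 {k A : Type*} [Field k] [AddCommGroup A]
    (hchar : (2 : k) ≠ 0)
    (htf : ∀ n : ℕ, 0 < n → ∀ a : A, n • a = 0 → a = 0)
    (c : k → k → A)
    (hfin : {a : A | ∃ x y : k, x ≠ 0 ∧ y ≠ 0 ∧ c x y = a}.Finite)
    (S1 : ∀ x y z : k, x ≠ 0 → y ≠ 0 → z ≠ 0 →
      c x y + c (x * y) z = c x (y * z) + c y z)
    (S2a : c 1 1 = 0)
    (S2b : ∀ x y : k, x ≠ 0 → y ≠ 0 → c x y = c x⁻¹ y⁻¹)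
    (S3 : ∀ x y : k, x ≠ 0 → y ≠ 0 → x ≠ 1 → c x y = c x ((1 - x) * y))
    (R1 : ∀ x y : k, x ≠ 0 → y ≠ 0 → c x y = c y⁻¹ x)
    (R2 : ∀ x y : k, x ≠ 0 → y ≠ 0 → c x y = c x (-(x * y)))
    (R3hom : ∀ x s t : k, x ≠ 0 → s ≠ 0 → t ≠ 0 →
      c x ((s * t) ^ 2) = c x (s ^ 2) + c x (t ^ 2)) :
    ∀ s t : k, t ≠ 0 → s ≠ 0 →
      (∃ (n : ℕ) (a : Fin (n + 1) → k), (∀ i, a i ≠ 0) ∧ s = ∑ i, (a i) ^ 2) →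
      c s t = 0 ∧ c t s = 0 :=
  statement14_general htf c hfin S1 S3 R1 R2 R3hom
end

section
/- Let P₁ and P₂ be thick subsets of a group G, where a symmetric subset P ⊆ G is called n-thick if for every g₁,…,gₙ ∈ G there exist 1 ≤ i < j ≤ n with gᵢ⁻¹gⱼ ∈ P, and thick if it is n-thick for some n. Then: (a) if P₁ is m-thick and P₂ is n-thick, then P₁ ∩ P₂ is thick; specifically, it is R(m,n)-thick, where R(m,n) is the two-color Ramsey number; (b) if φ : G → H is a surjective group homomorphism and P ⊆ G is n-thick, then φ[P] is an n-thick subset of H. -/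
/-- A subset `P` of a group `G` is `n`-thick if it is symmetric and among any `n`
elements `g₁, …, gₙ` of `G` there are `i < j` with `gᵢ⁻¹ gⱼ ∈ P`. -/
def IsNThick {G : Type*} [Group G] (P : Set G) (n : ℕ) : Prop :=
  (∀ x ∈ P, x⁻¹ ∈ P) ∧ ∀ g : Fin n → G, ∃ i j : Fin n, i < j ∧ (g i)⁻¹ * g j ∈ P

/-- (a) If `P₁` is `m`-thick and `P₂` is `n`-thick, then `P₁ ∩ P₂` is
`R`-thick for any `R` with the Ramsey property for `(m,n)` (in particular it is thick);
(b) the image of an `n`-thick set under a surjective homomorphism is `n`-thick. -/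
theorem statement18 {G : Type*} [Group G] (P₁ P₂ : Set G) (m n R : ℕ)
    (h₁ : IsNThick P₁ m) (h₂ : IsNThick P₂ n)
    (hR : ∀ col : Fin R → Fin R → Bool,
      (∃ s : Finset (Fin R), m ≤ s.card ∧ ∀ i ∈ s, ∀ j ∈ s, i < j → col i j = true) ∨
      (∃ s : Finset (Fin R), n ≤ s.card ∧ ∀ i ∈ s, ∀ j ∈ s, i < j → col i j = false)) :
    IsNThick (P₁ ∩ P₂) R ∧
      (∀ (H : Type*) [Group H] (φ : G →* H), Function.Surjective φ →
        ∀ (P : Set G) (k : ℕ), IsNThick P k → IsNThick (φ '' P) k) := by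
  classical
  constructor
  · constructor
    · rintro x ⟨hx1, hx2⟩
      exact ⟨h₁.1 x hx1, h₂.1 x hx2⟩
    · intro g
      set col : Fin R → Fin R → Bool := fun i j =>
        if (g i)⁻¹ * g j ∈ P₁ then false else true with hcol
      rcases hR col with ⟨s, hs, hmono⟩ | ⟨s, hs, hmono⟩
      · -- all pairs NOT in P₁, contradicting m-thickness of P₁
        exfalso
        set e := s.orderEmbOfCardLe hs
        obtain ⟨i, j, hij, hmem⟩ := h₁.2 (fun i => g (e i))
        have := hmono (e i) (s.orderEmbOfCardLe_mem hs i)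
          (e j) (s.orderEmbOfCardLe_mem hs j) (e.strictMono hij)
        simp only [hcol, if_pos hmem] at this
        exact Bool.false_ne_true this
      · -- all pairs in P₁; apply n-thickness of P₂
        set e := s.orderEmbOfCardLe hs
        obtain ⟨i, j, hij, hmem⟩ := h₂.2 (fun i => g (e i))
        refine ⟨e i, e j, e.strictMono hij, ?_, hmem⟩
        have := hmono (e i) (s.orderEmbOfCardLe_mem hs i)
          (e j) (s.orderEmbOfCardLe_mem hs j) (e.strictMono hij)
        simp only [hcol] at this
        by_contra hP
        simp [hP] at this
  · intro H _ φ hφ P k hP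
    constructor
    · rintro x ⟨y, hy, rfl⟩
      exact ⟨y⁻¹, hP.1 y hy, by simp⟩
    · intro g
      choose f hf using fun i => hφ (g i)
      obtain ⟨i, j, hij, hmem⟩ := hP.2 f
      exact ⟨i, j, hij, ⟨(f i)⁻¹ * f j, hmem, by simp [hf]⟩⟩
end

section
/- Let F be the free group on generators a₁,…,a_m with m ≥ 2, and define f : F → ℤ by f(g) = (number of occurrences of the word a₁a₁ in the reduced word representing g) − (number of occurrences of a₁⁻¹a₁⁻¹ in the reduced word representing g). For i ≥ 1 set b_i = a₂^i a₁^{−i} a₂ a₁^i. Then for all j > i ≥ 1 and all n ∈ ℤ, the element g = b_i b_j^{−1} satisfies f(gⁿ) = n. -/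
/-!
With `j = i + d`, the element `g = bᵢ bⱼ⁻¹` is the conjugate `a₂ⁱ c a₂⁻ⁱ` of the cyclically
reduced word `c = a₁⁻ⁱ a₂ a₁⁻ᵈ a₂⁻¹ a₁ʲ a₂⁻ᵈ`. Hence for `n > 0` the reduced word of `gⁿ` is the
plain concatenation `a₂ⁱ cⁿ a₂⁻ⁱ`. Since `c` begins and ends with a letter other than `a₁^{±1}`,
every occurrence of `a₁a₁` or `a₁⁻¹a₁⁻¹` lies inside one copy of `c`, and each copy contributes
`(j - 1) - (i - 1) - (d - 1) = 1`. For `n < 0` use that `f(g⁻¹) = -f(g)`: inverting a reduced word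
reverses it and flips every exponent, which exchanges the two patterns.
-/

/-- The number of (contiguous) occurrences of the word `p` in the word `w`. -/
def occCount {α : Type*} [DecidableEq α] (w p : List α) : ℕ :=
  ((List.range w.length).filter fun i => (w.drop i).take p.length = p).length

section OccCount

variable {α : Type*} [DecidableEq α]

@[simp]
theorem occCount_nil (p : List α) : occCount [] p = 0 := rfl

theorem occCount_cons (a : α) (w p : List α) :
    occCount (a :: w) p = (if (a :: w).take p.length = p then 1 else 0) + occCount w p := by
  unfold occCount
  rw [List.length_cons, List.range_succ_eq_map, List.filter_cons, List.filter_map]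
  simp only [Function.comp_def, List.drop_succ_cons, List.drop_zero]
  split <;> simp_all [add_comm]

theorem occCount_cons_pair (a : α) (w : List α) (c d : α) :
    occCount (a :: w) [c, d] =
      (if a = c ∧ w.head? = some d then 1 else 0) + occCount w [c, d] := by
  rw [occCount_cons]
  congr 2
  cases w <;> simp

theorem occCount_singleton_pair (a c d : α) : occCount [a] [c, d] = 0 := by
  simp [occCount_cons_pair]

theorem occCount_append_pair (u v : List α) (c d : α) :
    occCount (u ++ v) [c, d] = occCount u [c, d] + occCount v [c, d] +
      if u.getLast? = some c ∧ v.head? = some d then 1 else 0 := by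
  induction u with
  | nil => simp
  | cons a u ih =>
    rw [List.cons_append, occCount_cons_pair, occCount_cons_pair, ih]
    cases u with
    | nil => cases v <;> simp; omega
    | cons b u => simp; omega

theorem occCount_replicate_of_ne {a c : α} (h : a ≠ c) (k : ℕ) (d : α) :
    occCount (List.replicate k a) [c, d] = 0 := by
  induction k with
  | zero => rfl
  | succ k ih => simp [List.replicate_succ, occCount_cons_pair, h, ih]

theorem occCount_replicate_self (c : α) (k : ℕ) :
    occCount (List.replicate k c) [c, c] = k - 1 := by
  induction k with
  | zero => rfl
  | succ k ih =>
    cases k with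
    | zero => simp [occCount_singleton_pair]
    | succ k =>
      rw [List.replicate_succ, occCount_cons_pair, ih]
      simp [List.replicate_succ]
      omega

theorem occCount_replicate_append_append_replicate {a a' c : α} (ha : a ≠ c) (ha' : a' ≠ c)
    (k k' : ℕ) (w : List α) :
    occCount (List.replicate k a ++ w ++ List.replicate k' a') [c, c] = occCount w [c, c] := by
  simp [occCount_append_pair, occCount_replicate_of_ne, ha, ha', List.head?_replicate,
    List.getLast?_replicate]

theorem occCount_flatten_replicate {w : List α} {c d : α}
    (h : ¬(w.getLast? = some c ∧ w.head? = some d)) (n : ℕ) :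
    occCount (List.replicate n w).flatten [c, d] = n * occCount w [c, d] := by
  induction n with
  | zero => simp
  | succ n ih =>
    rw [List.replicate_succ, List.flatten_cons, occCount_append_pair, ih, if_neg, add_mul]
    · omega
    rintro ⟨hc, hd⟩
    rcases Nat.eq_zero_or_pos n with rfl | hn
    · simp at hd
    · exact h ⟨hc, by rwa [List.head?_flatten_replicate hn.ne'] at hd⟩

theorem occCount_invRev (w : List (α × Bool)) (x y : α) (b b' : Bool) :
    occCount (FreeGroup.invRev w) [(y, !b'), (x, !b)] = occCount w [(x, b), (y, b')] := by
  induction w with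
  | nil => rfl
  | cons a w ih =>
    rw [FreeGroup.invRev_cons, occCount_append_pair, ih, occCount_cons_pair, add_comm]
    cases w <;> simp [FreeGroup.invRev, occCount_singleton_pair, Prod.ext_iff, and_comm]

end OccCount

namespace FreeGroup

variable {α : Type*}

theorem mk_replicate_true (x : α) (k : ℕ) : mk (List.replicate k (x, true)) = of x ^ k := by
  rw [of, pow_mk, List.flatten_replicate_singleton]

theorem invRev_replicate (x : α) (s : Bool) (k : ℕ) :
    invRev (List.replicate k (x, s)) = List.replicate k (x, !s) := by
  simp [invRev]

theorem mk_replicate_false (x : α) (k : ℕ) :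
    mk (List.replicate k (x, false)) = (of x ^ k)⁻¹ := by
  rw [← mk_replicate_true, inv_mk, invRev_replicate, Bool.not_true]

theorem toWord_conj_pow [DecidableEq α] {u w : List (α × Bool)} (hw : IsCyclicallyReduced w)
    (h : IsReduced (u ++ w ++ invRev u)) {n : ℕ} (hn : n ≠ 0) :
    ((mk u * mk w * (mk u)⁻¹) ^ n).toWord = u ++ (List.replicate n w).flatten ++ invRev u := by
  rw [conj_pow, pow_mk, inv_mk, mul_mk, mul_mk, toWord_mk]
  exact (h.append_flatten_replicate_append hw hn).reduce_eq

end FreeGroup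

open FreeGroup List

def doubleLetterCount {α : Type*} [DecidableEq α] (x : α) (g : FreeGroup α) : ℤ :=
  occCount g.toWord [(x, true), (x, true)] - occCount g.toWord [(x, false), (x, false)]

theorem doubleLetterCount_inv {α : Type*} [DecidableEq α] (x : α) (g : FreeGroup α) :
    doubleLetterCount x g⁻¹ = -doubleLetterCount x g := by
  simp only [doubleLetterCount, toWord_inv]
  rw [← Bool.not_false, occCount_invRev, Bool.not_false, ← Bool.not_true, occCount_invRev]
  ring

section BElem

variable {α : Type*} (x y : α) (i d : ℕ)

def bElem (k : ℕ) : FreeGroup α := of y ^ k * (of x ^ k)⁻¹ * of y * of x ^ k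

def coreWord : List (α × Bool) :=
  replicate i (x, false) ++ [(y, true)] ++ replicate d (x, false) ++ [(y, false)] ++
    replicate (i + d) (x, true) ++ replicate d (y, false)

theorem bElem_mul_inv_bElem_add :
    bElem x y i * (bElem x y (i + d))⁻¹ =
      mk (replicate i (y, true)) * mk (coreWord x y i d) * (mk (replicate i (y, true)))⁻¹ := by
  have hy : mk [(y, true)] = of y := rfl
  have hy' : mk [(y, false)] = (of y)⁻¹ := by simpa using mk_replicate_false y 1
  simp only [bElem, coreWord, ← mul_mk, mk_replicate_true, mk_replicate_false, hy, hy']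
  group

variable {x y i d}

theorem isCyclicallyReduced_coreWord (hxy : x ≠ y) (hi : i ≠ 0) (hd : d ≠ 0) :
    IsCyclicallyReduced (coreWord x y i d) := by
  simp [isCyclicallyReduced_iff, FreeGroup.IsReduced, coreWord, isChain_append, isChain_cons,
    head?_append, getLast?_append, getLast?_cons, head?_replicate, getLast?_replicate,
    isChain_replicate_of_rel, hi, hd, hxy, hxy.symm]

theorem isReduced_conj_coreWord (hxy : x ≠ y) (hi : i ≠ 0) (hd : d ≠ 0) :
    IsReduced (replicate i (y, true) ++ coreWord x y i d ++ invRev (replicate i (y, true))) := by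
  simp [invRev_replicate, FreeGroup.IsReduced, coreWord, isChain_append, isChain_cons, head?_append,
    head?_replicate, getLast?_replicate, isChain_replicate_of_rel, hi, hd, hxy, hxy.symm]

variable [DecidableEq α]

theorem occCount_coreWord_true (hxy : x ≠ y) (hd : d ≠ 0) :
    occCount (coreWord x y i d) [(x, true), (x, true)] = i + d - 1 := by
  simp [coreWord, occCount_append_pair, occCount_replicate_of_ne, occCount_replicate_self,
    occCount_cons_pair, head?_append, head?_replicate, getLast?_replicate, hd, hxy.symm]

theorem occCount_coreWord_false (hxy : x ≠ y) :
    occCount (coreWord x y i d) [(x, false), (x, false)] = (i - 1) + (d - 1) := by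
  simp [coreWord, occCount_append_pair, occCount_replicate_of_ne, occCount_replicate_self,
    occCount_cons_pair, head?_append, head?_replicate, getLast?_replicate, hxy.symm]

theorem doubleLetterCount_bElem_mul_inv_pow (hxy : x ≠ y) (hi : i ≠ 0) (hd : d ≠ 0) (n : ℕ) :
    doubleLetterCount x ((bElem x y i * (bElem x y (i + d))⁻¹) ^ n) = n := by
  rcases Nat.eq_zero_or_pos n with rfl | hn
  · simp [doubleLetterCount]
  have hcount (s : Bool) :
      occCount (replicate i (y, true) ++ (replicate n (coreWord x y i d)).flatten ++
          replicate i (y, !true)) [(x, s), (x, s)] =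
        n * occCount (coreWord x y i d) [(x, s), (x, s)] := by
    rw [occCount_replicate_append_append_replicate (by simp [hxy.symm]) (by simp [hxy.symm]),
      occCount_flatten_replicate]
    simp [coreWord, getLast?_append, getLast?_cons, getLast?_replicate, hd, hxy.symm]
  rw [bElem_mul_inv_bElem_add, doubleLetterCount,
    toWord_conj_pow (isCyclicallyReduced_coreWord hxy hi hd) (isReduced_conj_coreWord hxy hi hd)
      hn.ne',
    invRev_replicate, hcount, hcount, occCount_coreWord_true hxy hd, occCount_coreWord_false hxy,
    show i + d - 1 = (i - 1) + (d - 1) + 1 by omega]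
  push_cast
  ring

end BElem

/-- In the free group on `a₁, …, a_m` (`m ≥ 2`), let `f(g)` count the
occurrences of `a₁a₁` minus those of `a₁⁻¹a₁⁻¹` in the reduced word of `g`, and let
`b_k = a₂^k a₁^{−k} a₂ a₁^k`. Then for `j > i ≥ 1` and `g = b_i b_j⁻¹` one has
`f(gⁿ) = n` for all `n ∈ ℤ`. -/
theorem statement19 (m : ℕ) (hm : 2 ≤ m) (i j : ℕ) (hi : 1 ≤ i) (hij : i < j) :
    ∀ n : ℤ,
      let x₀ : Fin m := ⟨0, by omega⟩
      let x₁ : Fin m := ⟨1, by omega⟩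
      let a₁ : FreeGroup (Fin m) := FreeGroup.of x₀
      let a₂ : FreeGroup (Fin m) := FreeGroup.of x₁
      let f : FreeGroup (Fin m) → ℤ := fun g =>
        (occCount g.toWord [(x₀, true), (x₀, true)] : ℤ) -
        (occCount g.toWord [(x₀, false), (x₀, false)] : ℤ)
      let b : ℕ → FreeGroup (Fin m) := fun k => a₂ ^ k * (a₁ ^ k)⁻¹ * a₂ * a₁ ^ k
      f ((b i * (b j)⁻¹) ^ n) = n := by
  intro n x₀ x₁ a₁ a₂ f b
  change doubleLetterCount x₀ ((bElem x₀ x₁ i * (bElem x₀ x₁ j)⁻¹) ^ n) = n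
  obtain ⟨d, rfl⟩ : ∃ d, j = i + d := ⟨j - i, by omega⟩
  have hx : x₀ ≠ x₁ := by simp [x₀, x₁, Fin.ext_iff]
  have hpow := doubleLetterCount_bElem_mul_inv_pow hx (i := i) (d := d) (by omega) (by omega)
  rcases n with k | k
  · exact hpow k
  · rw [zpow_negSucc, doubleLetterCount_inv, hpow]
    rfl
end
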